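/- arXiv:2209.11289 — 2 statements merged into one kernel-verified Lean document; each statement's English description precedes it below -/
import Mathlib

section
/- Fix 0 < α < 1 and d > 0. Place the target at the origin with the positive y-axis as its path. For a point Z at distance d from the origin, the Apollonius circle {P : dist(P, Z) = α · dist(P, T_path_point)} with foci Z and the target, i.e., the circle of radius αd/(1-α²) centered at distance α²d/(1-α²) from Z along the segment extension, is tangent to the y-axis if and only if the angle θ between the ray from the target to Z and the x-axis satisfies cos θ = α. Equivalently, cos θ = (dα/(1-α²)) / (d + dα²/(1-α²)) = α. -/
open Real

theorem stmt6 (α d θ : ℝ) (hα0 : 0 < α) (hα1 : α < 1) (hd : 0 < d)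
    (hθ0 : 0 ≤ θ) (hθ1 : θ ≤ π / 2)
    (C : ℝ × ℝ) (r : ℝ)
    (hC : C = ((d / (1 - α ^ 2)) * Real.cos θ, (d / (1 - α ^ 2)) * Real.sin θ))
    (hr : r = α * d / (1 - α ^ 2)) :
    ((∃! p : ℝ × ℝ, p.1 = 0 ∧ (p.1 - C.1) ^ 2 + (p.2 - C.2) ^ 2 = r ^ 2) ↔
      Real.cos θ = α) ∧
    (d * α / (1 - α ^ 2)) / (d + d * α ^ 2 / (1 - α ^ 2)) = α := by
  have h1 : (0:ℝ) < 1 - α ^ 2 := by nlinarith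
  have hcos : 0 ≤ Real.cos θ :=
    Real.cos_nonneg_of_mem_Icc ⟨by linarith [Real.pi_pos], hθ1⟩
  have hk : 0 < d / (1 - α ^ 2) := div_pos hd h1
  have hC1 : C.1 = (d / (1 - α ^ 2)) * Real.cos θ := by rw [hC]
  have hC1nn : 0 ≤ C.1 := by rw [hC1]; positivity
  have hrpos : 0 < r := by rw [hr]; positivity
  constructor
  · constructor
    · rintro ⟨p, ⟨hp1, hp2⟩, hu⟩
      by_contra hne
      rcases lt_or_gt_of_ne hne with h | h
      · -- cos θ < α : two solutions
        have hlt : C.1 ^ 2 < r ^ 2 := by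
          rw [hC1, hr]
          have : (d / (1 - α ^ 2)) * Real.cos θ < (d / (1 - α ^ 2)) * α :=
            mul_lt_mul_of_pos_left h hk
          have h2 : α * d / (1 - α ^ 2) = (d / (1 - α ^ 2)) * α := by ring
          rw [h2]
          nlinarith
        set s := Real.sqrt (r ^ 2 - C.1 ^ 2) with hs_def
        have hs : 0 < s := Real.sqrt_pos.2 (by linarith)
        have hs2 : s ^ 2 = r ^ 2 - C.1 ^ 2 := Real.sq_sqrt (by linarith)
        have e1 : ((0 : ℝ), C.2 + s) = p :=
          hu ((0 : ℝ), C.2 + s) ⟨rfl, by simp; nlinarith⟩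
        have e2 : ((0 : ℝ), C.2 - s) = p :=
          hu ((0 : ℝ), C.2 - s) ⟨rfl, by simp; nlinarith⟩
        have : C.2 + s = C.2 - s := by
          have := e1.trans e2.symm
          exact congrArg Prod.snd this
        linarith
      · -- cos θ > α : no solution
        have hgt : C.1 ^ 2 > r ^ 2 := by
          rw [hC1, hr]
          have : (d / (1 - α ^ 2)) * α < (d / (1 - α ^ 2)) * Real.cos θ :=
            mul_lt_mul_of_pos_left h hk
          have h2 : α * d / (1 - α ^ 2) = (d / (1 - α ^ 2)) * α := by ring
          rw [h2]
          nlinarith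
        rw [hp1] at hp2
        nlinarith [sq_nonneg (p.2 - C.2)]
    · intro hcα
      have hC1r : C.1 = r := by
        rw [hC1, hr, hcα]; ring
      refine ⟨((0 : ℝ), C.2), ⟨rfl, by simp [hC1r]⟩, ?_⟩
      rintro ⟨x, y⟩ ⟨hx, hxy⟩
      simp only at hx
      subst hx
      have hxy' : ((0:ℝ) - r) ^ 2 + (y - C.2) ^ 2 = r ^ 2 := by
        rw [hC1r] at hxy; exact hxy
      have hy : (y - C.2) ^ 2 = 0 := by
        have hrr : ((0:ℝ) - r) ^ 2 = r ^ 2 := by ring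
        linarith
      have hy2 : y = C.2 := by
        have := pow_eq_zero_iff (n := 2) (by norm_num) |>.mp hy
        linarith
      simp only [Prod.mk.injEq]
      exact ⟨trivial, hy2⟩
  · have hden : d + d * α ^ 2 / (1 - α ^ 2) = d / (1 - α ^ 2) := by
      field_simp; ring
    rw [hden]
    field_simp
end

section
/- Let 0 < α < 1, R > 0, m = √(1-α²)/α, observer at (x_O, y_O) with x_O > 0. Suppose the line y = m x intersects the circle (x-x_O)² + (y-y_O)² = R² at two distinct points, both of whose x-coordinates are ≥ x_O. Then the point W = (x_O, y_O - R) lies on or above the line, i.e., y_O - R ≥ m·x_O. -/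
open Real

theorem stmt17 (α R m xO yO x₁ x₂ : ℝ) (hα0 : 0 < α) (hα1 : α < 1) (hR : 0 < R)
    (hm : m = Real.sqrt (1 - α ^ 2) / α) (hxO : 0 < xO)
    (hne : x₁ ≠ x₂)
    (h₁ : (x₁ - xO) ^ 2 + (m * x₁ - yO) ^ 2 = R ^ 2)
    (h₂ : (x₂ - xO) ^ 2 + (m * x₂ - yO) ^ 2 = R ^ 2)
    (hx₁ : xO ≤ x₁) (hx₂ : xO ≤ x₂) :
    m * xO ≤ yO - R := by
  have hm0 : 0 < m := by
    rw [hm]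
    apply div_pos _ hα0
    apply Real.sqrt_pos.mpr
    nlinarith
  have hfac : (x₁ - x₂) * ((1 + m ^ 2) * (x₁ + x₂) - 2 * (xO + m * yO)) = 0 := by
    linear_combination h₁ - h₂
  have hsum : (1 + m ^ 2) * (x₁ + x₂) = 2 * (xO + m * yO) := by
    rcases mul_eq_zero.mp hfac with h | h
    · exact absurd (sub_eq_zero.mp h) hne
    · linarith
  have hsum_gt : 2 * xO < x₁ + x₂ := by
    rcases hx₁.lt_or_eq with h | h
    · rcases hx₂.lt_or_eq with h' | h'
      · linarith
      · linarith
    · have : x₂ ≠ xO := fun hc => hne (h.symm.trans hc.symm)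
      have : xO < x₂ := lt_of_le_of_ne hx₂ (Ne.symm this)
      linarith
  have hyO : m * xO < yO := by nlinarith [sq_nonneg m, hm0]
  have hkey : (m * xO - yO) ^ 2 - R ^ 2 = (1 + m ^ 2) * (x₁ - xO) * (x₂ - xO) := by
    linear_combination h₁ + (xO - x₁) * hsum
  have hge : R ^ 2 ≤ (m * xO - yO) ^ 2 := by
    nlinarith [mul_nonneg (sub_nonneg.mpr hx₁) (sub_nonneg.mpr hx₂), sq_nonneg m]
  nlinarith [hge, hyO, hR]
end
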